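/- For any Banach space X and free ultrafilter U on ℕ, the ultrapower X_U satisfies n(X_U) ≤ n(X). -/

import Mathlib

open Filter Metric ENNReal

noncomputable def nradius {E : Type*} [SeminormedAddCommGroup E] [NormedSpace ℝ E]
    (T : E →L[ℝ] E) : ℝ :=
  sSup {r : ℝ | ∃ (x : E) (f : E →L[ℝ] ℝ), ‖x‖ = 1 ∧ ‖f‖ = 1 ∧ f x = 1 ∧ r = |f (T x)|}

noncomputable def nindex (E : Type*) [SeminormedAddCommGroup E] [NormedSpace ℝ E] : ℝ :=
  sInf {r : ℝ | ∃ T : E →L[ℝ] E, ‖T‖ = 1 ∧ r = nradius T}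

noncomputable def nullIdeal (X : ℕ → Type*) [∀ n, NormedAddCommGroup (X n)]
    [∀ n, NormedSpace ℝ (X n)] (U : Ultrafilter ℕ) : Submodule ℝ (lp X ∞) where
  carrier := {f | Tendsto (fun n => ‖f n‖) (U : Filter ℕ) (nhds 0)}
  zero_mem' := by
    simpa using (tendsto_const_nhds : Tendsto (fun _ : ℕ => (0 : ℝ)) (U : Filter ℕ) (nhds 0))
  add_mem' := by
    intro f g hf hg
    have h := hf.add hg
    rw [add_zero] at h
    refine squeeze_zero (fun n => norm_nonneg _) (fun n => ?_) h
    simpa using norm_add_le (f n) (g n)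
  smul_mem' := by
    intro c f hf
    have h := hf.const_mul ‖c‖
    rw [mul_zero] at h
    refine squeeze_zero (fun n => norm_nonneg _) (fun n => ?_) h
    simp [norm_smul]


/-!
A norm-one operator `T` on `X` acts coordinatewise on bounded sequences and hence on the
ultrapower, giving an operator `T_U` with `‖T_U‖ = ‖T‖` (constant sequences embed `X`
isometrically) and `(1 + tT)_U = 1 + t T_U`, so `‖1 + t T_U‖ ≤ ‖1 + t T‖` for all real `t`.
Such a norm comparison already forces `v(T_U) ≤ v(T)`: a state `(x, f)` gives
`1 + t f(Tx) ≤ ‖1 + tT‖`, and conversely, if `f(Tz) ≤ ρ` for every state `(z, f)`, then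
`‖1 + tT‖ ≤ 1 + tρ + 2t²‖T‖²`, because a functional norming `u + tTu` is a state at the
normalization of `u + tTu`, which lies within `2t‖T‖` of `u`. Letting `t → 0⁺` for `T` and `-T`
bounds every `|f(T_U x)|` by `v(T)`.
-/

open Topology NormedSpace

section NumericalRadius

variable {E X : Type*} [SeminormedAddCommGroup E] [NormedSpace ℝ E]
  [NormedAddCommGroup X] [NormedSpace ℝ X]

lemma nradius_nonneg (T : E →L[ℝ] E) : 0 ≤ nradius T :=
  Real.sSup_nonneg <| by
    rintro r ⟨x, f, -, -, -, rfl⟩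
    positivity

lemma abs_le_nradius (T : E →L[ℝ] E) {x : E} {f : E →L[ℝ] ℝ}
    (hx : ‖x‖ = 1) (hf : ‖f‖ = 1) (hfx : f x = 1) : |f (T x)| ≤ nradius T := by
  refine le_csSup ⟨‖T‖, ?_⟩ ⟨x, f, hx, hf, hfx, rfl⟩
  rintro r ⟨y, g, hy, hg, -, rfl⟩
  calc |g (T y)| = ‖g (T y)‖ := (Real.norm_eq_abs _).symm
    _ ≤ ‖g‖ * (‖T‖ * ‖y‖) := (g.le_opNorm _).trans (by gcongr; exact T.le_opNorm y)
    _ = ‖T‖ := by rw [hg, hy, one_mul, mul_one]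

lemma apply_le_norm_of_norm_le_one {f : E →L[ℝ] ℝ} (hf : ‖f‖ ≤ 1) (v : E) : f v ≤ ‖v‖ :=
  calc f v ≤ ‖f‖ * ‖v‖ := (Real.le_norm_self _).trans (f.le_opNorm v)
    _ ≤ ‖v‖ := mul_le_of_le_one_left (norm_nonneg v) hf

lemma one_add_mul_le_norm_one_add_smul (S : E →L[ℝ] E) (t : ℝ) {x : E} {f : E →L[ℝ] ℝ}
    (hx : ‖x‖ = 1) (hf : ‖f‖ = 1) (hfx : f x = 1) : 1 + t * f (S x) ≤ ‖1 + t • S‖ :=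
  calc 1 + t * f (S x) = f ((1 + t • S) x) := by simp [hfx]
    _ ≤ ‖(1 + t • S) x‖ := apply_le_norm_of_norm_le_one hf.le _
    _ ≤ ‖1 + t • S‖ := by simpa [hx] using (1 + t • S).le_opNorm x

lemma norm_sub_normalize_le {u : X} (hu : ‖u‖ = 1) (y : X) :
    ‖u - normalize y‖ ≤ 2 * ‖u - y‖ := by
  rcases eq_or_ne y 0 with rfl | hy
  · simp [hu]
  have hyz : ‖y - normalize y‖ ≤ ‖u - y‖ :=
    calc ‖y - normalize y‖ = ‖(‖y‖ - 1) • normalize y‖ := by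
          rw [sub_smul, one_smul, norm_smul_normalize]
      _ = |‖y‖ - ‖u‖| := by rw [norm_smul, norm_normalize hy, mul_one, hu, Real.norm_eq_abs]
      _ ≤ ‖u - y‖ := by rw [abs_sub_comm]; exact abs_norm_sub_norm_le u y
  calc ‖u - normalize y‖ ≤ ‖u - y‖ + ‖y - normalize y‖ := norm_sub_le_norm_sub_add_norm_sub _ _ _
    _ ≤ 2 * ‖u - y‖ := by linarith

lemma norm_add_smul_apply_le (S : X →L[ℝ] X) {ρ t : ℝ} (hρ : 0 ≤ ρ) (ht : 0 ≤ t)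
    (hS : ∀ (z : X) (g : X →L[ℝ] ℝ), ‖z‖ = 1 → ‖g‖ = 1 → g z = 1 → g (S z) ≤ ρ)
    {u : X} (hu : ‖u‖ = 1) : ‖u + t • S u‖ ≤ 1 + t * (ρ + 2 * t * ‖S‖ ^ 2) := by
  set y := u + t • S u
  rcases eq_or_ne y 0 with hy | hy
  · rw [hy, norm_zero]
    positivity
  obtain ⟨g, hg, hgy⟩ := exists_dual_vector ℝ y (norm_ne_zero_iff.2 hy)
  replace hgy : g y = ‖y‖ := hgy
  have hgz : g (normalize y) = 1 := by
    rw [NormedSpace.normalize, map_smul, hgy, smul_eq_mul, inv_mul_cancel₀ (norm_ne_zero_iff.2 hy)]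
  have huz : ‖u - normalize y‖ ≤ 2 * t * ‖S‖ :=
    calc ‖u - normalize y‖ ≤ 2 * ‖u - y‖ := norm_sub_normalize_le hu y
      _ = 2 * (t * ‖S u‖) := by simp [y, norm_smul, abs_of_nonneg ht]
      _ ≤ 2 * (t * ‖S‖) := by
          gcongr
          simpa [hu] using S.le_opNorm u
      _ = 2 * t * ‖S‖ := by ring
  have hgSu : g (S u) ≤ ρ + 2 * t * ‖S‖ ^ 2 :=
    calc g (S u) = g (S (normalize y)) + g (S (u - normalize y)) := by simp
      _ ≤ ρ + ‖S‖ * ‖u - normalize y‖ := by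
          refine add_le_add (hS _ g (norm_normalize hy) hg hgz) ?_
          exact (apply_le_norm_of_norm_le_one hg.le _).trans (S.le_opNorm _)
      _ ≤ ρ + 2 * t * ‖S‖ ^ 2 := by nlinarith [norm_nonneg S]
  have hgu : g u ≤ 1 := hu ▸ apply_le_norm_of_norm_le_one hg.le u
  calc ‖y‖ = g u + t * g (S u) := by simp [← hgy, y]
    _ ≤ 1 + t * (ρ + 2 * t * ‖S‖ ^ 2) := by gcongr

lemma norm_one_add_smul_le (S : X →L[ℝ] X) {ρ t : ℝ} (hρ : 0 ≤ ρ) (ht : 0 ≤ t)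
    (hS : ∀ (z : X) (g : X →L[ℝ] ℝ), ‖z‖ = 1 → ‖g‖ = 1 → g z = 1 → g (S z) ≤ ρ) :
    ‖1 + t • S‖ ≤ 1 + t * (ρ + 2 * t * ‖S‖ ^ 2) :=
  ContinuousLinearMap.opNorm_le_of_unit_norm (by positivity) fun u hu => by
    simpa using norm_add_smul_apply_le S hρ ht hS hu

lemma apply_le_of_norm_one_add_smul_le (S : X →L[ℝ] X) (S' : E →L[ℝ] E) {ρ : ℝ} (hρ : 0 ≤ ρ)
    (hS : ∀ (z : X) (g : X →L[ℝ] ℝ), ‖z‖ = 1 → ‖g‖ = 1 → g z = 1 → g (S z) ≤ ρ)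
    (hSS' : ∀ t : ℝ, ‖1 + t • S'‖ ≤ ‖1 + t • S‖) {x : E} {f : E →L[ℝ] ℝ}
    (hx : ‖x‖ = 1) (hf : ‖f‖ = 1) (hfx : f x = 1) : f (S' x) ≤ ρ := by
  have hbound : ∀ t > 0, f (S' x) ≤ ρ + 2 * t * ‖S‖ ^ 2 := fun t ht => by
    have := (one_add_mul_le_norm_one_add_smul S' t hx hf hfx).trans
      ((hSS' t).trans (norm_one_add_smul_le S hρ ht.le hS))
    exact le_of_mul_le_mul_left (by linarith) ht
  have hlim : Tendsto (fun t : ℝ => ρ + 2 * t * ‖S‖ ^ 2) (𝓝[>] 0) (𝓝 ρ) := by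
    have : Continuous fun t : ℝ => ρ + 2 * t * ‖S‖ ^ 2 := by fun_prop
    simpa using (this.tendsto 0).mono_left nhdsWithin_le_nhds
  exact ge_of_tendsto hlim (eventually_nhdsWithin_of_forall hbound)

lemma nradius_le_of_norm_one_add_smul_le (S : X →L[ℝ] X) (S' : E →L[ℝ] E)
    (hSS' : ∀ t : ℝ, ‖1 + t • S'‖ ≤ ‖1 + t • S‖) : nradius S' ≤ nradius S := by
  refine Real.sSup_le ?_ (nradius_nonneg S)
  rintro r ⟨x, f, hx, hf, hfx, rfl⟩
  have hneg : ∀ t : ℝ, ‖1 + t • -S'‖ ≤ ‖1 + t • -S‖ := fun t => by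
    simpa only [smul_neg, neg_smul] using hSS' (-t)
  refine abs_le.2 ⟨?_, ?_⟩
  · have := apply_le_of_norm_one_add_smul_le (-S) (-S') (nradius_nonneg S)
      (fun z g hz hg hgz => by
        simpa using (neg_le_abs _).trans (abs_le_nradius S hz hg hgz)) hneg hx hf hfx
    simp only [neg_apply, map_neg] at this
    linarith
  · exact apply_le_of_norm_one_add_smul_le S S' (nradius_nonneg S)
      (fun z g hz hg hgz => (le_abs_self _).trans (abs_le_nradius S hz hg hgz)) hSS' hx hf hfx

end NumericalRadius

lemma nindex_eq_zero_of_subsingleton (E : Type*) [SeminormedAddCommGroup E] [NormedSpace ℝ E]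
    [Subsingleton E] : nindex E = 0 := by
  have hempty : {r : ℝ | ∃ T : E →L[ℝ] E, ‖T‖ = 1 ∧ r = nradius T} = ∅ := by
    refine Set.eq_empty_of_forall_notMem ?_
    rintro r ⟨T, hT, -⟩
    simp [Subsingleton.elim T 0] at hT
  rw [nindex, hempty, Real.sInf_empty]

lemma nindex_le_nindex_of_forall {E F : Type*} [NormedAddCommGroup E] [NormedSpace ℝ E]
    [Nontrivial E] [SeminormedAddCommGroup F] [NormedSpace ℝ F]
    (h : ∀ T : E →L[ℝ] E, ‖T‖ = 1 → ∃ S : F →L[ℝ] F, ‖S‖ = 1 ∧ nradius S ≤ nradius T) :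
    nindex F ≤ nindex E := by
  refine le_csInf ⟨_, 1, norm_one, rfl⟩ ?_
  rintro _ ⟨T, hT, rfl⟩
  obtain ⟨S, hS, hST⟩ := h T hT
  have hbdd : BddBelow {r : ℝ | ∃ S : F →L[ℝ] F, ‖S‖ = 1 ∧ r = nradius S} := by
    refine ⟨0, ?_⟩
    rintro _ ⟨S, -, rfl⟩
    exact nradius_nonneg S
  exact (csInf_le hbdd ⟨S, hS, rfl⟩).trans hST

instance {α : Type*} {E : α → Type*} [∀ i, NormedAddCommGroup (E i)] [∀ i, Subsingleton (E i)]
    {p : ℝ≥0∞} : Subsingleton (lp E p) :=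
  ⟨fun _ _ => lp.ext <| funext fun _ => Subsingleton.elim _ _⟩

section Linfty

variable {α 𝕜 E F : Type*} [NontriviallyNormedField 𝕜]
  [NormedAddCommGroup E] [NormedSpace 𝕜 E] [NormedAddCommGroup F] [NormedSpace 𝕜 F]

def linftyConst (x : E) : lp (fun _ : α => E) ∞ :=
  ⟨fun _ => x, memℓp_infty ⟨‖x‖, by rintro _ ⟨_, rfl⟩; rfl⟩⟩

lemma norm_linftyConst_le (x : E) : ‖(linftyConst x : lp (fun _ : α => E) ∞)‖ ≤ ‖x‖ :=
  lp.norm_le_of_forall_le (norm_nonneg x) fun _ => le_rfl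

lemma norm_apply_apply_le (T : E →L[𝕜] F) (f : lp (fun _ : α => E) ∞) (i : α) :
    ‖T (f i)‖ ≤ ‖T‖ * ‖f‖ :=
  (T.le_opNorm _).trans (by gcongr; exact lp.norm_apply_le_norm top_ne_zero f i)

noncomputable def linftyMap (T : E →L[𝕜] F) : lp (fun _ : α => E) ∞ →L[𝕜] lp (fun _ : α => F) ∞ :=
  LinearMap.mkContinuous
    { toFun f := ⟨fun i => T (f i), memℓp_infty ⟨‖T‖ * ‖f‖, by
        rintro _ ⟨i, rfl⟩
        exact norm_apply_apply_le T f i⟩⟩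
      map_add' f g := lp.ext <| funext fun i => map_add T (f i) (g i)
      map_smul' c f := lp.ext <| funext fun i => map_smul T c (f i) }
    ‖T‖ fun f => lp.norm_le_of_forall_le (by positivity) (norm_apply_apply_le T f)

end Linfty

lemma Submodule.norm_liftQL_le {𝕜 M N : Type*} [NontriviallyNormedField 𝕜]
    [SeminormedAddCommGroup M] [NormedSpace 𝕜 M] [SeminormedAddCommGroup N] [NormedSpace 𝕜 N]
    (S : Submodule 𝕜 M) (f : M →L[𝕜] N) (h : S ≤ f.ker) : ‖S.liftQL f h‖ ≤ ‖f‖ := by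
  refine ContinuousLinearMap.opNorm_le_bound _ (norm_nonneg f) fun x => ?_
  have hlim : Tendsto (fun ε : ℝ => ‖f‖ * (‖x‖ + ε)) (𝓝[>] 0) (𝓝 (‖f‖ * ‖x‖)) := by
    have : Continuous fun ε : ℝ => ‖f‖ * (‖x‖ + ε) := by fun_prop
    simpa using (this.tendsto 0).mono_left nhdsWithin_le_nhds
  refine ge_of_tendsto hlim (eventually_nhdsWithin_of_forall fun ε hε => ?_)
  obtain ⟨m, rfl, hm⟩ := Submodule.Quotient.norm_mk_lt x hε
  exact (f.le_opNorm m).trans (by gcongr)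

section Ultrapower

variable {X Y : Type*} [NormedAddCommGroup X] [NormedSpace ℝ X]
  [NormedAddCommGroup Y] [NormedSpace ℝ Y] (U : Ultrafilter ℕ)

abbrev Ultrapower (X : Type*) [NormedAddCommGroup X] [NormedSpace ℝ X] (U : Ultrafilter ℕ) :=
  lp (fun _ : ℕ => X) ∞ ⧸ nullIdeal (fun _ => X) U

lemma linftyMap_mem_nullIdeal (T : X →L[ℝ] Y) {f : lp (fun _ : ℕ => X) ∞}
    (hf : f ∈ nullIdeal (fun _ => X) U) : linftyMap T f ∈ nullIdeal (fun _ => Y) U := by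
  have h : Tendsto (fun n => ‖T‖ * ‖f n‖) U (𝓝 0) := by simpa using hf.const_mul ‖T‖
  exact squeeze_zero (fun n => norm_nonneg _) (fun n => T.le_opNorm (f n)) h

noncomputable def ultrapowerMap (T : X →L[ℝ] Y) : Ultrapower X U →L[ℝ] Ultrapower Y U :=
  (nullIdeal (fun _ => X) U).liftQL ((nullIdeal (fun _ => Y) U).mkQL ∘L linftyMap T)
    fun _ hf => (Submodule.Quotient.mk_eq_zero _).2 (linftyMap_mem_nullIdeal U T hf)

lemma ultrapowerMap_mk (T : X →L[ℝ] Y) (f : lp (fun _ : ℕ => X) ∞) :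
    ultrapowerMap U T (Submodule.Quotient.mk f) = Submodule.Quotient.mk (linftyMap T f) := rfl

lemma norm_ultrapowerMap_le (T : X →L[ℝ] Y) : ‖ultrapowerMap U T‖ ≤ ‖T‖ :=
  (Submodule.norm_liftQL_le _ _ _).trans <|
    ContinuousLinearMap.opNorm_le_bound _ (norm_nonneg T) fun f =>
      (Submodule.Quotient.norm_mk_le _ _).trans ((linftyMap T).le_of_opNorm_le
        (LinearMap.mkContinuous_norm_le _ (norm_nonneg T) _) f)

lemma norm_mk_linftyConst (x : X) :
    ‖(Submodule.Quotient.mk (linftyConst x) : Ultrapower X U)‖ = ‖x‖ := by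
  refine le_antisymm ((Submodule.Quotient.norm_mk_le _ _).trans (norm_linftyConst_le x)) ?_
  refine (QuotientAddGroup.le_norm_iff (S := (nullIdeal (fun _ => X) U).toAddSubgroup)).2 ?_
  intro m hm
  have hnull : m - linftyConst x ∈ nullIdeal (fun _ => X) U := (Submodule.Quotient.eq _).1 hm
  have hlim : Tendsto (fun n => ‖m n‖) U (𝓝 ‖x‖) :=
    (tendsto_iff_norm_sub_tendsto_zero.2 hnull).norm
  exact le_of_tendsto' hlim fun n => lp.norm_apply_le_norm top_ne_zero m n

lemma norm_ultrapowerMap (T : X →L[ℝ] Y) : ‖ultrapowerMap U T‖ = ‖T‖ := by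
  refine le_antisymm (norm_ultrapowerMap_le U T) <|
    ContinuousLinearMap.opNorm_le_bound _ (norm_nonneg (ultrapowerMap U T)) fun x => ?_
  calc ‖T x‖ = ‖ultrapowerMap U T (Submodule.Quotient.mk (linftyConst x))‖ := by
        rw [ultrapowerMap_mk, ← norm_mk_linftyConst U (T x)]
        rfl
    _ ≤ ‖ultrapowerMap U T‖ * ‖x‖ := by
        simpa only [norm_mk_linftyConst] using
          (ultrapowerMap U T).le_opNorm (Submodule.Quotient.mk (linftyConst x))

lemma ultrapowerMap_one_add_smul (T : X →L[ℝ] X) (t : ℝ) :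
    ultrapowerMap U (1 + t • T) = 1 + t • ultrapowerMap U T := by
  ext q
  induction q using Submodule.Quotient.induction_on with
  | _ f => rfl

lemma nradius_ultrapowerMap_le (T : X →L[ℝ] X) :
    nradius (ultrapowerMap U T : Ultrapower X U →L[ℝ] Ultrapower X U) ≤ nradius T :=
  nradius_le_of_norm_one_add_smul_le T _ fun t => by
    rw [← ultrapowerMap_one_add_smul]
    exact norm_ultrapowerMap_le U _

end Ultrapower

theorem ultrapower_nindex_le_general
    (X : Type*) [NormedAddCommGroup X] [NormedSpace ℝ X]
    (U : Ultrafilter ℕ) :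
    nindex (lp (fun _ : ℕ => X) ∞ ⧸ nullIdeal (fun _ => X) U) ≤ nindex X := by
  rcases subsingleton_or_nontrivial X with hX | hX
  · rw [nindex_eq_zero_of_subsingleton, nindex_eq_zero_of_subsingleton]
  · exact nindex_le_nindex_of_forall fun T hT =>
      ⟨ultrapowerMap U T, (norm_ultrapowerMap U T).trans hT, nradius_ultrapowerMap_le U T⟩

theorem ultrapower_nindex_le
    (X : Type*) [NormedAddCommGroup X] [NormedSpace ℝ X] [CompleteSpace X]
    (U : Ultrafilter ℕ) (hU : (U : Filter ℕ) ≤ Filter.cofinite) :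
    nindex (lp (fun _ : ℕ => X) ∞ ⧸ nullIdeal (fun _ => X) U) ≤ nindex X :=
  ultrapower_nindex_le_general X U
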